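/- arXiv:1312.2283 — 2 statements merged into one kernel-verified Lean document; each statement's English description precedes it below -/
import Mathlib

section
/- Let p, q, r be real polynomials and α, β ≥ 0 real numbers. Then the number of non-real zeros (with multiplicity) of p·q·r' + α·p'·q·r + β·p·q'·r is at most Z_C(p) + Z_C(q) + Z_C(r). -/
open Polynomial Finset

open scoped Classical in
/-- Number of non-real complex zeros of a real polynomial, counted with multiplicity. -/
noncomputable def ZC (p : Polynomial ℝ) : ℕ :=
  (((p.map (algebraMap ℝ ℂ)).roots).filter (fun z => z.im ≠ 0)).card

/-- Number of real zeros of a real polynomial, counted with multiplicity. -/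
noncomputable def ZR (p : Polynomial ℝ) : ℕ := p.roots.card

/-!
Write `f = p q r' + α p' q r + β p q' r` and `P = p q r`. For `α, β > 0` the function
`|p|^α |q|^β r` vanishes at the real zeros of `P` and has derivative `|p|^α |q|^β f / (p q)`
between them, so by Rolle `f` has a zero strictly between any two consecutive real zeros of `P`;
moreover a zero of multiplicity `m` of `P` is a zero of multiplicity at least `m - 1` of `f`.
Hence `ZR f ≥ ZR P - 1`, and since `deg f < deg P`,
`ZC f = deg f - ZR f ≤ deg P - ZR P = ZC p + ZC q + ZC r`.
If `α = 0` (or `β = 0`), then `p` (or `q`) factors out of `f` and the positive case applies.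
-/

theorem roots_map_complex_filter_im_eq_zero (g : ℝ[X]) :
    (g.map (algebraMap ℝ ℂ)).roots.filter (fun z => z.im = 0) = g.roots.map (↑) := by
  classical
  refine Multiset.ext.2 fun z => ?_
  rw [Multiset.count_filter]
  split_ifs with hz
  · obtain ⟨x, rfl⟩ : ∃ x : ℝ, (x : ℂ) = z := ⟨z.re, Complex.ext rfl hz.symm⟩
    rw [Multiset.count_map_eq_count' _ _ Complex.ofReal_injective, count_roots, count_roots]
    exact (eq_rootMultiplicity_map (algebraMap ℝ ℂ).injective x).symm
  · refine (Multiset.count_eq_zero.2 fun hz' => hz ?_).symm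
    obtain ⟨x, -, rfl⟩ := Multiset.mem_map.1 hz'
    exact Complex.ofReal_im x

theorem ZC_add_ZR (g : ℝ[X]) : ZC g + ZR g = g.natDegree := by
  classical
  rw [← IsAlgClosed.card_roots_map_eq_natDegree_from_simpleRing (algebraMap ℝ ℂ) g,
    ← Multiset.filter_add_not (fun z => z.im ≠ 0) (g.map (algebraMap ℝ ℂ)).roots,
    Multiset.card_add, ZC, ZR]
  simp only [not_not, roots_map_complex_filter_im_eq_zero, Multiset.card_map]

theorem ZC_one : ZC 1 = 0 := by simp [ZC]

theorem ZC_mul {u v : ℝ[X]} (hu : u ≠ 0) (hv : v ≠ 0) : ZC (u * v) = ZC u + ZC v := by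
  rw [ZC, ZC, ZC, Polynomial.map_mul, roots_mul (mul_ne_zero (map_ne_zero hu) (map_ne_zero hv)),
    Multiset.filter_add, Multiset.card_add]

theorem ZC_mul_le (u v : ℝ[X]) : ZC (u * v) ≤ ZC u + ZC v := by
  rcases eq_or_ne u 0 with rfl | hu
  · simp [ZC]
  rcases eq_or_ne v 0 with rfl | hv
  · simp [ZC]
  exact (ZC_mul hu hv).le

theorem ZC_le_of_natDegree_lt {f P : ℝ[X]} (hdeg : f.natDegree < P.natDegree)
    (hroots : Multiset.card P.roots ≤ Multiset.card f.roots + 1) : ZC f ≤ ZC P := by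
  have hf := ZC_add_ZR f
  have hP := ZC_add_ZR P
  rw [ZR] at hf hP
  omega

theorem card_roots_le_card_roots_add_one_of_interleaved {R : Type*} [CommRing R] [IsDomain R]
    [LinearOrder R] {P D : R[X]} (hD : D ≠ 0)
    (hmult : ∀ x, P.rootMultiplicity x - 1 ≤ D.rootMultiplicity x)
    (hbetween : ∀ a b, a < b → P.IsRoot a → P.IsRoot b → (∀ y ∈ Set.Ioo a b, ¬ P.IsRoot y) →
      ∃ c ∈ Set.Ioo a b, D.IsRoot c) :
    Multiset.card P.roots ≤ Multiset.card D.roots + 1 := by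
  rcases eq_or_ne P 0 with rfl | hP
  · simp
  have hinter : P.roots.toFinset.card ≤ (D.roots.toFinset \ P.roots.toFinset).card + 1 := by
    refine Finset.card_le_sdiff_of_interleaved fun a ha b hb hab hgap => ?_
    rw [Multiset.mem_toFinset, mem_roots hP] at ha hb
    obtain ⟨c, hc, hDc⟩ := hbetween a b hab ha hb fun y hy hPy =>
      hgap y (Multiset.mem_toFinset.2 ((mem_roots hP).2 hPy)) hy
    exact ⟨c, Multiset.mem_toFinset.2 ((mem_roots hD).2 hDc), hc⟩
  calc
    Multiset.card P.roots = ∑ x ∈ P.roots.toFinset, P.roots.count x :=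
      (Multiset.toFinset_sum_count_eq _).symm
    _ = ∑ x ∈ P.roots.toFinset, (P.roots.count x - 1 + 1) :=
      Finset.sum_congr rfl fun _ hx => (tsub_add_cancel_of_le <|
        Nat.succ_le_iff.2 <| Multiset.count_pos.2 <| Multiset.mem_toFinset.1 hx).symm
    _ = (∑ x ∈ P.roots.toFinset, (P.rootMultiplicity x - 1)) + P.roots.toFinset.card := by
      simp only [Finset.sum_add_distrib, Finset.card_eq_sum_ones, count_roots]
    _ ≤ (∑ x ∈ P.roots.toFinset, D.rootMultiplicity x) +
          ((D.roots.toFinset \ P.roots.toFinset).card + 1) :=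
      add_le_add (Finset.sum_le_sum fun x _ => hmult x) hinter
    _ ≤ (∑ x ∈ P.roots.toFinset, D.roots.count x) +
          ((∑ x ∈ D.roots.toFinset \ P.roots.toFinset, D.roots.count x) + 1) := by
      simp only [← count_roots, Finset.card_eq_sum_ones]
      gcongr with x hx
      rw [Nat.succ_le_iff, Multiset.count_pos, ← Multiset.mem_toFinset]
      exact (Finset.mem_sdiff.1 hx).1
    _ = Multiset.card D.roots + 1 := by
      rw [← add_assoc, ← Finset.sum_union Finset.disjoint_sdiff, Finset.union_sdiff_self_eq_union,
        ← Multiset.toFinset_sum_count_eq, ← Finset.sum_subset Finset.subset_union_right]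
      intro x _ hx
      simpa only [Multiset.mem_toFinset, Multiset.count_eq_zero] using hx

section WeightedDeriv

variable {R : Type*} [CommRing R]

noncomputable def weightedDeriv (p q r : R[X]) (α β : R) : R[X] :=
  p * q * derivative r + C α * (derivative p * q * r) + C β * (p * derivative q * r)

variable (p q r : R[X]) (α β : R)

theorem weightedDeriv_zero_left : weightedDeriv p q r 0 β = p * weightedDeriv 1 q r 1 β := by
  simp only [weightedDeriv, derivative_one, map_zero, map_one]
  ring

theorem weightedDeriv_zero_right : weightedDeriv p q r α 0 = q * weightedDeriv p 1 r α 1 := by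
  simp only [weightedDeriv, derivative_one, map_zero, map_one]
  ring

theorem pow_add_sub_one_dvd_mul_derivative {a u w : R[X]} {m n : ℕ} (hu : a ^ m ∣ u)
    (hw : a ^ n ∣ w) : a ^ (m + (n - 1)) ∣ u * derivative w :=
  pow_add a m (n - 1) ▸ mul_dvd_mul hu (pow_sub_one_dvd_derivative_of_pow_dvd hw)

theorem pow_sub_one_dvd_weightedDeriv {a : R[X]} {m k l : ℕ} (hp : a ^ m ∣ p) (hq : a ^ k ∣ q)
    (hr : a ^ l ∣ r) : a ^ (m + k + l - 1) ∣ weightedDeriv p q r α β := by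
  have hpq := mul_dvd_mul hp hq
  have hqr := mul_dvd_mul hq hr
  have hpr := mul_dvd_mul hp hr
  rw [← pow_add] at hpq hqr hpr
  have h₁ := pow_add_sub_one_dvd_mul_derivative hpq hr
  have h₂ : a ^ (k + l + (m - 1)) ∣ derivative p * q * r := by
    rw [mul_assoc, mul_comm]; exact pow_add_sub_one_dvd_mul_derivative hqr hp
  have h₃ : a ^ (m + l + (k - 1)) ∣ p * derivative q * r := by
    rw [mul_right_comm]; exact pow_add_sub_one_dvd_mul_derivative hpr hq
  refine dvd_add (dvd_add ?_ (dvd_mul_of_dvd_right ?_ _)) (dvd_mul_of_dvd_right ?_ _) <;>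
    refine (pow_dvd_pow a ?_).trans ‹_› <;> omega

variable [IsDomain R]

theorem mul_ne_zero_of_weightedDeriv_ne_zero (h : weightedDeriv p q r α β ≠ 0) :
    p * q * r ≠ 0 := by
  contrapose! h
  rcases mul_eq_zero.1 h with h | rfl
  · rcases mul_eq_zero.1 h with rfl | rfl <;> simp [weightedDeriv]
  · simp [weightedDeriv]

theorem rootMultiplicity_sub_one_le_rootMultiplicity_weightedDeriv
    (h : weightedDeriv p q r α β ≠ 0) (x : R) :
    (p * q * r).rootMultiplicity x - 1 ≤ (weightedDeriv p q r α β).rootMultiplicity x := by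
  have hpqr := mul_ne_zero_of_weightedDeriv_ne_zero p q r α β h
  rw [rootMultiplicity_mul hpqr, rootMultiplicity_mul (left_ne_zero_of_mul hpqr),
    le_rootMultiplicity_iff h]
  exact pow_sub_one_dvd_weightedDeriv p q r α β (pow_rootMultiplicity_dvd p x)
    (pow_rootMultiplicity_dvd q x) (pow_rootMultiplicity_dvd r x)

theorem degree_mul_derivative_lt {u w : R[X]} (h : u * w ≠ 0) :
    degree (u * derivative w) < degree (u * w) := by
  rw [degree_mul, degree_mul]
  exact WithBot.add_lt_add_left (degree_ne_bot.2 (left_ne_zero_of_mul h))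
    (degree_derivative_lt (right_ne_zero_of_mul h))

theorem degree_weightedDeriv_lt (h : p * q * r ≠ 0) :
    degree (weightedDeriv p q r α β) < degree (p * q * r) := by
  have hC : ∀ (c : R) (t : R[X]), degree (C c * t) ≤ degree t := fun c t => by
    rw [C_mul']; exact degree_smul_le c t
  have h₁ := degree_mul_derivative_lt h
  have h₂ : degree (derivative p * q * r) < degree (p * q * r) := by
    have e : ∀ u, u * q * r = q * r * u := fun u => by ring
    rw [e, e]
    exact degree_mul_derivative_lt (by rwa [← e])
  have h₃ : degree (p * derivative q * r) < degree (p * q * r) := by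
    have e : ∀ u, p * u * r = p * r * u := fun u => mul_right_comm p u r
    rw [e, e]
    exact degree_mul_derivative_lt (by rwa [← e])
  exact (degree_add_le _ _).trans_lt (max_lt ((degree_add_le _ _).trans_lt
    (max_lt h₁ ((hC α _).trans_lt h₂))) ((hC β _).trans_lt h₃))

end WeightedDeriv

theorem HasDerivAt.abs_rpow_const {g : ℝ → ℝ} {g' x : ℝ} (hg : HasDerivAt g g' x) (hx : g x ≠ 0)
    (γ : ℝ) : HasDerivAt (fun y => |g y| ^ γ) (γ * |g x| ^ γ * (g' / g x)) x := by
  have h := ((hasDerivAt_abs hx).comp x hg).rpow_const (p := γ) (Or.inl (abs_ne_zero.2 hx))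
  refine h.congr_deriv ?_
  rw [Function.comp_apply, Real.rpow_sub_one (abs_ne_zero.2 hx)]
  field_simp
  linear_combination g' * γ * self_mul_sign (g x)

theorem hasDerivAt_abs_rpow_mul_abs_rpow_mul_eval (p q r : ℝ[X]) (α β : ℝ) {x : ℝ}
    (hp : p.eval x ≠ 0) (hq : q.eval x ≠ 0) :
    HasDerivAt (fun y => |p.eval y| ^ α * |q.eval y| ^ β * r.eval y)
      (|p.eval x| ^ α * |q.eval x| ^ β * (weightedDeriv p q r α β).eval x /
        (p.eval x * q.eval x)) x := by
  refine ((((p.hasDerivAt x).abs_rpow_const hp α).mul ((q.hasDerivAt x).abs_rpow_const hq β)).mul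
    (r.hasDerivAt x)).congr_deriv ?_
  simp only [weightedDeriv, eval_add, eval_mul, eval_C, Pi.mul_apply]
  field_simp
  ring

theorem exists_isRoot_weightedDeriv_mem_Ioo {p q r : ℝ[X]} {α β : ℝ} (hα : 0 < α)
    (hβ : 0 < β) {a b : ℝ} (hab : a < b) (ha : (p * q * r).IsRoot a) (hb : (p * q * r).IsRoot b)
    (hgap : ∀ y ∈ Set.Ioo a b, ¬ (p * q * r).IsRoot y) :
    ∃ c ∈ Set.Ioo a b, (weightedDeriv p q r α β).IsRoot c := by
  set F : ℝ → ℝ := fun y => |p.eval y| ^ α * |q.eval y| ^ β * r.eval y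
  have hF : Continuous F := by
    refine Continuous.mul (Continuous.mul ?_ ?_) r.continuous
    · exact (Real.continuous_rpow_const hα.le).comp p.continuous.abs
    · exact (Real.continuous_rpow_const hβ.le).comp q.continuous.abs
  have hF_root : ∀ y, (p * q * r).IsRoot y → F y = 0 := fun y hy => by
    simp only [IsRoot, eval_mul, mul_eq_zero] at hy
    rcases hy with (hy | hy) | hy <;> simp [F, hy, hα.ne', hβ.ne']
  have hpq : ∀ y ∈ Set.Ioo a b, p.eval y ≠ 0 ∧ q.eval y ≠ 0 := fun y hy => by
    have h := hgap y hy
    simp only [IsRoot, eval_mul, mul_eq_zero, not_or] at h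
    exact h.1
  obtain ⟨c, hc, hc0⟩ := exists_hasDerivAt_eq_zero hab hF.continuousOn
    ((hF_root a ha).trans (hF_root b hb).symm) fun y hy =>
      hasDerivAt_abs_rpow_mul_abs_rpow_mul_eval p q r α β (hpq y hy).1 (hpq y hy).2
  obtain ⟨hpc, hqc⟩ := hpq c hc
  have hpα := (Real.rpow_pos_of_pos (abs_pos.2 hpc) α).ne'
  have hqβ := (Real.rpow_pos_of_pos (abs_pos.2 hqc) β).ne'
  exact ⟨c, hc, by simpa [hpc, hqc, hpα, hqβ] using hc0⟩

theorem ZC_weightedDeriv_le_of_pos (p q r : ℝ[X]) {α β : ℝ} (hα : 0 < α) (hβ : 0 < β) :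
    ZC (weightedDeriv p q r α β) ≤ ZC p + ZC q + ZC r := by
  by_cases hf : weightedDeriv p q r α β = 0
  · simp [hf, ZC]
  have hpqr := mul_ne_zero_of_weightedDeriv_ne_zero p q r α β hf
  obtain ⟨hpq, hr⟩ := mul_ne_zero_iff.1 hpqr
  obtain ⟨hp, hq⟩ := mul_ne_zero_iff.1 hpq
  rw [← ZC_mul hp hq, ← ZC_mul hpq hr]
  exact ZC_le_of_natDegree_lt (natDegree_lt_natDegree hf (degree_weightedDeriv_lt p q r α β hpqr))
    (card_roots_le_card_roots_add_one_of_interleaved hf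
      (rootMultiplicity_sub_one_le_rootMultiplicity_weightedDeriv p q r α β hf)
      fun _ _ hab ha hb hgap => exists_isRoot_weightedDeriv_mem_Ioo hα hβ hab ha hb hgap)

theorem ZC_weightedDeriv_le_of_pos_of_nonneg (p q r : ℝ[X]) {α β : ℝ} (hα : 0 < α) (hβ : 0 ≤ β) :
    ZC (weightedDeriv p q r α β) ≤ ZC p + ZC q + ZC r := by
  rcases hβ.eq_or_lt with rfl | hβ
  · calc ZC (weightedDeriv p q r α 0) ≤ ZC q + ZC (weightedDeriv p 1 r α 1) := by
          rw [weightedDeriv_zero_right]; exact ZC_mul_le _ _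
      _ ≤ ZC q + (ZC p + ZC 1 + ZC r) := by grw [ZC_weightedDeriv_le_of_pos p 1 r hα one_pos]
      _ = ZC p + ZC q + ZC r := by rw [ZC_one]; ring
  · exact ZC_weightedDeriv_le_of_pos p q r hα hβ

theorem stmt5 (p q r : Polynomial ℝ) (α β : ℝ) (hα : 0 ≤ α) (hβ : 0 ≤ β) :
    ZC (p * q * derivative r + C α * (derivative p * q * r) + C β * (p * derivative q * r))
      ≤ ZC p + ZC q + ZC r := by
  change ZC (weightedDeriv p q r α β) ≤ _
  rcases hα.eq_or_lt with rfl | hα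
  · calc ZC (weightedDeriv p q r 0 β) ≤ ZC p + ZC (weightedDeriv 1 q r 1 β) := by
          rw [weightedDeriv_zero_left]; exact ZC_mul_le _ _
      _ ≤ ZC p + (ZC 1 + ZC q + ZC r) := by
          grw [ZC_weightedDeriv_le_of_pos_of_nonneg 1 q r one_pos hβ]
      _ = ZC p + ZC q + ZC r := by rw [ZC_one]; ring
  · exact ZC_weightedDeriv_le_of_pos_of_nonneg p q r hα hβ
end

section
/- Let P_n denote the Legendre polynomials. For every real polynomial p(x) = Σ_{k=0}^n a_k P_k(x), the polynomial Σ_{k=0}^n k(k+1) a_k P_k(x) has at most as many non-real zeros (with multiplicity) as p; that is, {k²+k}_{k=0}^∞ is a complex zero decreasing sequence for the Legendre basis. -/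
open Polynomial Finset

/-!
The Legendre operator `p ↦ (x² - 1) p'' + 2x p'` is `p ↦ ((x² - 1) p')'`, and it multiplies `P_k`
by `k(k + 1)`; so the polynomial `∑ k(k+1) aₖ Pₖ` is `((x² - 1) p')'` for `p = ∑ aₖ Pₖ`.
By Rolle's theorem a real polynomial loses at most one real zero under differentiation while its
degree drops by exactly one, so differentiation does not increase the number of non-real zeros;
multiplying by `x² - 1`, whose zeros are real, does not change it either.
-/

lemma mem_range_algebraMap_iff_im_eq_zero (z : ℂ) :
    z ∈ (algebraMap ℝ ℂ).range ↔ z.im = 0 :=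
  ⟨by rintro ⟨r, rfl⟩; simp, fun h => ⟨z.re, Complex.ext rfl (by simp [h])⟩⟩

lemma ZC_add_card_roots (p : ℝ[X]) : ZC p + p.roots.card = p.natDegree := by
  classical
  have hinj : Function.Injective (algebraMap ℝ ℂ) := (algebraMap ℝ ℂ).injective
  have hreal : (p.map (algebraMap ℝ ℂ)).roots.filter (fun z => ¬z.im ≠ 0)
      = p.roots.map (algebraMap ℝ ℂ) := by
    rw [← filter_roots_map_range_eq_map_roots hinj]
    exact Multiset.filter_congr fun z _ => by
      rw [not_not, mem_range_algebraMap_iff_im_eq_zero]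
  rw [ZC, ← p.roots.card_map (algebraMap ℝ ℂ), ← hreal, ← Multiset.card_add,
    Multiset.filter_add_not, IsAlgClosed.card_roots_map_eq_natDegree_of_injective p hinj]

lemma ZC_eq_zero_of_card_roots_eq_natDegree {p : ℝ[X]} (h : p.roots.card = p.natDegree) :
    ZC p = 0 := by
  have := ZC_add_card_roots p
  omega

lemma ZC_mul_s13 {p q : ℝ[X]} (hp : p ≠ 0) (hq : q ≠ 0) : ZC (p * q) = ZC p + ZC q := by
  have hinj : Function.Injective (algebraMap ℝ ℂ) := (algebraMap ℝ ℂ).injective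
  have hpq : p.map (algebraMap ℝ ℂ) * q.map (algebraMap ℝ ℂ) ≠ 0 := mul_ne_zero
    ((Polynomial.map_ne_zero_iff hinj).mpr hp) ((Polynomial.map_ne_zero_iff hinj).mpr hq)
  rw [ZC, ZC, ZC, Polynomial.map_mul, roots_mul hpq, Multiset.filter_add, Multiset.card_add]

lemma ZC_X_sub_C (r : ℝ) : ZC (X - C r) = 0 :=
  ZC_eq_zero_of_card_roots_eq_natDegree (by simp)

lemma ZC_X_sq_sub_one : ZC (X ^ 2 - 1) = 0 := by
  have hfactor : (X ^ 2 - 1 : ℝ[X]) = (X - C 1) * (X - C (-1)) := by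
    simp only [map_one, map_neg]; ring
  rw [hfactor, ZC_mul_s13 (X_sub_C_ne_zero 1) (X_sub_C_ne_zero (-1)), ZC_X_sub_C, ZC_X_sub_C]

lemma ZC_derivative_le (p : ℝ[X]) : ZC (derivative p) ≤ ZC p := by
  rcases eq_or_ne (derivative p) 0 with hd | hd
  · simp [hd, ZC]
  have hdeg : p.natDegree ≠ 0 := fun h => hd (derivative_of_natDegree_zero h)
  have hdeg' := natDegree_derivative_lt hdeg
  have hrolle := card_roots_le_derivative p
  have hp := ZC_add_card_roots p
  have hp' := ZC_add_card_roots (derivative p)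
  omega

section LegendreOperator

variable {R : Type*} [CommRing R]

noncomputable def legendreOperator : R[X] →ₗ[R] R[X] :=
  derivative ∘ₗ LinearMap.mulLeft R (X ^ 2 - 1) ∘ₗ derivative

lemma legendreOperator_eq_derivative (p : R[X]) :
    legendreOperator p = derivative ((X ^ 2 - 1) * derivative p) :=
  rfl

lemma legendreOperator_apply (p : R[X]) :
    legendreOperator p = (X ^ 2 - 1) * derivative (derivative p) + 2 * X * derivative p := by
  simp only [legendreOperator_eq_derivative, derivative_mul, derivative_sub, derivative_X_pow,
    derivative_one, Nat.cast_ofNat, map_ofNat]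
  ring

lemma legendreOperator_C_mul (a : R) (p : R[X]) :
    legendreOperator (C a * p) = C a * legendreOperator p := by
  rw [← smul_eq_C_mul, ← smul_eq_C_mul, map_smul]

end LegendreOperator

lemma ZC_legendreOperator_le (p : ℝ[X]) : ZC (legendreOperator p) ≤ ZC p := by
  rcases eq_or_ne (derivative p) 0 with hd | hd
  · simp [legendreOperator_eq_derivative, hd, ZC]
  have hX : (X ^ 2 - 1 : ℝ[X]) ≠ 0 := by
    simpa using X_pow_sub_C_ne_zero two_pos (1 : ℝ)
  rw [legendreOperator_eq_derivative]
  calc ZC (derivative ((X ^ 2 - 1) * derivative p))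
      ≤ ZC ((X ^ 2 - 1) * derivative p) := ZC_derivative_le _
    _ = ZC (derivative p) := by rw [ZC_mul_s13 hX hd, ZC_X_sq_sub_one, zero_add]
    _ ≤ ZC p := ZC_derivative_le p

theorem stmt13_general (P : ℕ → Polynomial ℝ)
    (hde : ∀ n, (X ^ 2 - 1) * derivative (derivative (P n)) + 2 * X * derivative (P n)
        = C ((n : ℝ) * ((n : ℝ) + 1)) * P n)
    (n : ℕ) (a : ℕ → ℝ) :
    ZC (∑ k ∈ Finset.range (n + 1), C ((k : ℝ) * ((k : ℝ) + 1) * a k) * P k)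
      ≤ ZC (∑ k ∈ Finset.range (n + 1), C (a k) * P k) := by
  have hsum : ∑ k ∈ Finset.range (n + 1), C ((k : ℝ) * ((k : ℝ) + 1) * a k) * P k
      = legendreOperator (∑ k ∈ Finset.range (n + 1), C (a k) * P k) := by
    rw [map_sum]
    refine Finset.sum_congr rfl fun k _ => ?_
    rw [legendreOperator_C_mul, legendreOperator_apply, hde k, C_mul, C_mul]
    ring
  rw [hsum]
  exact ZC_legendreOperator_le _

theorem stmt13 (P : ℕ → Polynomial ℝ) (hdeg : ∀ n, (P n).degree = n)
    (hde : ∀ n, (X ^ 2 - 1) * derivative (derivative (P n)) + 2 * X * derivative (P n)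
        = C ((n : ℝ) * ((n : ℝ) + 1)) * P n)
    (n : ℕ) (a : ℕ → ℝ) :
    ZC (∑ k ∈ Finset.range (n + 1), C ((k : ℝ) * ((k : ℝ) + 1) * a k) * P k)
      ≤ ZC (∑ k ∈ Finset.range (n + 1), C (a k) * P k) :=
  stmt13_general P hde n a
end
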